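/- Let 1 ≤ p ≤ q with p ≥ 2, and let φ : ℂ[x₁,…,x_p, y₁,…,y_q] → ℂ[x₁,…,x_{p−1}, y₁,…,y_q] be the ring homomorphism with φ(x_p) = 0 and all other variables mapped to the correspondingly named variables. Then for every polynomial f invariant under all permutations of the x-variables and all permutations of the y-variables, φ(f) lies in J_{p−1,q} if and only if there exists a polynomial h (invariant under the same permutation groups) with f − e_p(x)·h ∈ J_{p,q}. In other words, the kernel of the induced map between the two quotient rings is the ideal generated by σ_p. -/

import Mathlib

open MvPolynomial

/-- `e_r(x)`, the `r`-th elementary symmetric polynomial in the `x`-variables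
`x₁,…,x_p` of `ℂ[x₁,…,x_p, y₁,…,y_q]` (zero for `r > p`, and `e₀ = 1`). -/
noncomputable def ex (p q r : ℕ) : MvPolynomial (Fin p ⊕ Fin q) ℂ :=
  rename Sum.inl (esymm (Fin p) ℂ r)

/-- `e_s(y)`, the `s`-th elementary symmetric polynomial in the `y`-variables
`y₁,…,y_q` of `ℂ[x₁,…,x_p, y₁,…,y_q]` (zero for `s > q`, and `e₀ = 1`). -/
noncomputable def ey (p q s : ℕ) : MvPolynomial (Fin p ⊕ Fin q) ℂ :=
  rename Sum.inr (esymm (Fin q) ℂ s)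

/-- `c_k = Σ_{r+s=k} e_r(x) e_s(y)`, the degree-`k` homogeneous component of
`∏ᵢ(1+xᵢ) · ∏ⱼ(1+yⱼ) - 1`. -/
noncomputable def ck (p q k : ℕ) : MvPolynomial (Fin p ⊕ Fin q) ℂ :=
  ∑ r ∈ Finset.range (k + 1), ex p q r * ey p q (k - r)

/-- The ideal `J_{p,q}` generated by the `c_k` for `1 ≤ k ≤ p + q`. -/
noncomputable def Jpq (p q : ℕ) : Ideal (MvPolynomial (Fin p ⊕ Fin q) ℂ) :=
  Ideal.span {f | ∃ k : ℕ, 1 ≤ k ∧ k ≤ p + q ∧ f = ck p q k}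

/-- `f` is invariant under all permutations of the `x`-variables among
themselves and all permutations of the `y`-variables among themselves. -/
def BiSymmetric (p q : ℕ) (f : MvPolynomial (Fin p ⊕ Fin q) ℂ) : Prop :=
  ∀ (sx : Equiv.Perm (Fin p)) (sy : Equiv.Perm (Fin q)),
    rename (Equiv.sumCongr sx sy) f = f

/-- The ring homomorphism
`ℂ[x₁,…,x_p, y₁,…,y_q] → ℂ[x₁,…,x_{p-1}, y₁,…,y_q]` (here `p = p' + 1`)
sending `x_p ↦ 0` and every other variable to the correspondingly named
variable. -/
noncomputable def phi (p' q : ℕ) :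
    MvPolynomial (Fin (p' + 1) ⊕ Fin q) ℂ →ₐ[ℂ]
      MvPolynomial (Fin p' ⊕ Fin q) ℂ :=
  aeval (Sum.elim (Fin.lastCases 0 fun i => X (Sum.inl i)) (fun j => X (Sum.inr j)))

variable {S : Type*} [CommRing S] [Algebra ℂ S]

lemma aeval_sub_mem {σ : Type*} (I : Ideal (MvPolynomial σ ℂ)) (v : σ → MvPolynomial σ ℂ)
    (hv : ∀ s, v s - X s ∈ I) (g : MvPolynomial σ ℂ) : aeval v g - g ∈ I := by
  induction g using MvPolynomial.induction_on with
  | C a => simp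
  | add p q hp hq =>
      have : aeval v (p + q) - (p + q) = (aeval v p - p) + (aeval v q - q) := by
        rw [map_add]; ring
      rw [this]; exact I.add_mem hp hq
  | mul_X p s hp =>
      have : aeval v (p * X s) - p * X s
          = (aeval v p - p) * v s + p * (v s - X s) := by
        rw [map_mul, aeval_X]; ring
      rw [this]; exact I.add_mem (I.mul_mem_right _ hp) (I.mul_mem_left _ (hv s))

lemma esymm_eq_zero_of_lt {n r : ℕ} (h : n < r) : esymm (Fin n) ℂ r = 0 := by
  rw [esymm, Finset.powersetCard_eq_empty.2 (by simpa using h), Finset.sum_empty]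

/-- killing the last variable in esymm -/
lemma aeval_esymm_last_zero (n r : ℕ) (v : Fin (n + 1) → S) (h0 : v (Fin.last n) = 0) :
    aeval v (esymm (Fin (n + 1)) ℂ r) = aeval (v ∘ Fin.castSucc) (esymm (Fin n) ℂ r) := by
  rw [esymm, esymm, map_sum, map_sum]
  simp_rw [map_prod, aeval_X]
  rw [← Finset.sum_subset (Finset.powersetCard_mono (Finset.subset_univ
      (Finset.univ.map Fin.castSuccEmb))) (fun t ht hnt => ?_)]
  · rw [Finset.powersetCard_map, Finset.sum_map]
    refine Finset.sum_congr rfl fun t _ => ?_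
    rw [show ((Finset.mapEmbedding Fin.castSuccEmb).toEmbedding t) = t.map Fin.castSuccEmb from Finset.mapEmbedding_apply, Finset.prod_map]
    rfl
  · refine Finset.prod_eq_zero (i := Fin.last n) ?_ h0
    by_contra hlast
    refine hnt ?_
    rw [Finset.mem_powersetCard] at ht ⊢
    refine ⟨fun i hi => ?_, ht.2⟩
    rw [Finset.mem_map]
    rcases Fin.eq_castSucc_or_eq_last i with ⟨j, rfl⟩ | rfl
    · exact ⟨j, Finset.mem_univ _, rfl⟩
    · exact absurd hi hlast


lemma ex_eq_zero {p q r : ℕ} (h : p < r) : ex p q r = 0 := by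
  rw [ex, esymm_eq_zero_of_lt h, map_zero]
lemma ey_eq_zero {p q s : ℕ} (h : q < s) : ey p q s = 0 := by
  rw [ey, esymm_eq_zero_of_lt h, map_zero]

lemma phi_ex (p' q r : ℕ) : phi p' q (ex (p' + 1) q r) = ex p' q r := by
  rw [ex, phi, aeval_rename, Sum.elim_comp_inl,
    aeval_esymm_last_zero _ _ _ (by simp)]
  have : (Fin.lastCases (motive := fun _ => MvPolynomial (Fin p' ⊕ Fin q) ℂ) 0
      (fun i => X (Sum.inl i))) ∘ Fin.castSucc = fun i : Fin p' => X (Sum.inl i) := by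
    funext i; simp [Function.comp]
  rw [this, ex]
  rw [rename_eq_aeval]; rfl

lemma phi_ey (p' q s : ℕ) : phi p' q (ey (p' + 1) q s) = ey p' q s := by
  rw [ey, phi, aeval_rename, Sum.elim_comp_inr, ey]
  rw [rename_eq_aeval]; rfl

lemma phi_ck (p' q k : ℕ) : phi p' q (ck (p' + 1) q k) = ck p' q k := by
  rw [ck, ck, map_sum]
  exact Finset.sum_congr rfl fun r _ => by rw [map_mul, phi_ex, phi_ey]

lemma ck_big_zero (p q k : ℕ) (h : p + q < k) : ck p q k = 0 := by
  rw [ck]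
  refine Finset.sum_eq_zero fun r hr => ?_
  rcases lt_or_ge p r with h1 | h1
  · rw [ex_eq_zero h1, zero_mul]
  · rw [ey_eq_zero (by omega), mul_zero]

lemma phi_J {p' q : ℕ} {g : MvPolynomial (Fin (p' + 1) ⊕ Fin q) ℂ}
    (hg : g ∈ Jpq (p' + 1) q) : phi p' q g ∈ Jpq p' q := by
  refine Submodule.span_induction ?_ (by simp) (fun a b _ _ ha hb => by
    rw [map_add]; exact (Jpq p' q).add_mem ha hb)
    (fun a b _ hb => by rw [smul_eq_mul, map_mul]; exact (Jpq p' q).mul_mem_left _ hb) hg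
  rintro f ⟨k, hk1, hk2, rfl⟩
  rw [phi_ck]
  rcases le_or_gt k (p' + q) with h | h
  · exact Ideal.subset_span ⟨k, hk1, h, rfl⟩
  · rw [ck_big_zero _ _ _ h]; exact (Jpq p' q).zero_mem

lemma Jpq_mem_iff {p q : ℕ} (g : MvPolynomial (Fin p ⊕ Fin q) ℂ) :
    g ∈ Jpq p q ↔ ∃ a : ℕ → MvPolynomial (Fin p ⊕ Fin q) ℂ,
      g = ∑ k ∈ Finset.Icc 1 (p + q), a k * ck p q k := by
  constructor
  · intro hg
    refine Submodule.span_induction ?_ ⟨0, by simp⟩ ?_ ?_ hg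
    · rintro f ⟨k, hk1, hk2, rfl⟩
      refine ⟨fun j => if j = k then 1 else 0, ?_⟩
      rw [Finset.sum_eq_single k ?_ ?_]
      · simp
      · intro j _ hj; simp [hj]
      · intro hk; exact absurd (Finset.mem_Icc.2 ⟨hk1, hk2⟩) hk
    · rintro a b _ _ ⟨u, rfl⟩ ⟨v, rfl⟩
      refine ⟨u + v, ?_⟩
      rw [← Finset.sum_add_distrib]
      refine Finset.sum_congr rfl fun k _ => ?_
      rw [Pi.add_apply, add_mul]
    · rintro r b _ ⟨u, rfl⟩
      refine ⟨fun k => r * u k, ?_⟩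
      rw [smul_eq_mul, Finset.mul_sum]
      exact Finset.sum_congr rfl fun k _ => (mul_assoc _ _ _).symm
  · rintro ⟨a, rfl⟩
    refine (Jpq p q).sum_mem fun k hk => (Jpq p q).mul_mem_left _ ?_
    rw [Finset.mem_Icc] at hk
    exact Ideal.subset_span ⟨k, hk.1, hk.2, rfl⟩

lemma rename_ex (p q r : ℕ) (sx : Equiv.Perm (Fin p)) (sy : Equiv.Perm (Fin q)) :
    rename (Equiv.sumCongr sx sy) (ex p q r) = ex p q r := by
  rw [ex, rename_rename]
  have h : (Equiv.sumCongr sx sy) ∘ Sum.inl = Sum.inl ∘ ⇑sx := by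
    funext i; simp
  rw [h, ← rename_rename, rename_esymm]

lemma rename_ey (p q s : ℕ) (sx : Equiv.Perm (Fin p)) (sy : Equiv.Perm (Fin q)) :
    rename (Equiv.sumCongr sx sy) (ey p q s) = ey p q s := by
  rw [ey, rename_rename]
  have h : (Equiv.sumCongr sx sy) ∘ Sum.inr = Sum.inr ∘ ⇑sy := by
    funext j; simp
  rw [h, ← rename_rename, rename_esymm]

noncomputable def Psi (p q : ℕ) :
    MvPolynomial (Fin p ⊕ Fin q) ℂ →ₐ[ℂ] MvPolynomial (Fin p ⊕ Fin q) ℂ :=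
  aeval (Sum.elim (fun i : Fin p => ex p q (i.1 + 1)) (fun j : Fin q => ey p q (j.1 + 1)))

lemma Psi_bisym (p q : ℕ) (g : MvPolynomial (Fin p ⊕ Fin q) ℂ) :
    BiSymmetric p q (Psi p q g) := by
  intro sx sy
  have h : (rename (Equiv.sumCongr sx sy)).comp (Psi p q) = Psi p q := by
    apply algHom_ext
    rintro (i | j) <;>
      simp [Psi, rename_ex, rename_ey]
  exact AlgHom.congr_fun h g

abbrev Ry (q : ℕ) := MvPolynomial (Fin q) ℂ

noncomputable def eqv (p q : ℕ) :
    MvPolynomial (Fin p ⊕ Fin q) ℂ ≃ₐ[ℂ] MvPolynomial (Fin p) (Ry q) :=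
  sumAlgEquiv ℂ (Fin p) (Fin q)

noncomputable def epsY (q : ℕ) : Ry q →ₐ[ℂ] Ry q :=
  aeval (fun j : Fin q => esymm (Fin q) ℂ (j.1 + 1))

noncomputable def Amap (p q : ℕ) :
    MvPolynomial (Fin p) (Ry q) →ₐ[Ry q] MvPolynomial (Fin p) (Ry q) :=
  aeval (fun i : Fin p => esymm (Fin p) (Ry q) (i.1 + 1))

lemma eqv_X_inl (p q : ℕ) (i : Fin p) : eqv p q (X (Sum.inl i)) = X i := by
  simp [eqv, sumAlgEquiv_X_inl]

lemma eqv_X_inr (p q : ℕ) (j : Fin q) : eqv p q (X (Sum.inr j)) = C (X j) := by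
  simp [eqv, sumAlgEquiv_X_inr]

lemma epsY_eq (q : ℕ) : ⇑(epsY q) = Subtype.val ∘ ⇑(esymmAlgHom (Fin q) ℂ q) := by
  funext g
  rw [Function.comp_apply, esymmAlgHom_apply]
  rfl

lemma epsY_inj (q : ℕ) : Function.Injective (epsY q) := by
  rw [epsY_eq]
  exact Subtype.val_injective.comp (esymmAlgHom_injective ℂ (by simp))

lemma Amap_eq (p q : ℕ) :
    ⇑(Amap p q) = Subtype.val ∘ ⇑(esymmAlgHom (Fin p) (Ry q) p) := by
  funext g
  rw [Function.comp_apply, esymmAlgHom_apply]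
  rfl

lemma Amap_inj (p q : ℕ) : Function.Injective (Amap p q) := by
  rw [Amap_eq]
  exact Subtype.val_injective.comp (esymmAlgHom_injective (Ry q) (by simp))

lemma eqv_ex (p q r : ℕ) : eqv p q (ex p q r) = esymm (Fin p) (Ry q) r := by
  have h : ∀ t : MvPolynomial (Fin p) ℂ,
      eqv p q (rename Sum.inl t) = map (algebraMap ℂ (Ry q)) t := by
    intro t
    have hcomp : ((eqv p q).toAlgHom.comp (rename Sum.inl) :
        MvPolynomial (Fin p) ℂ →ₐ[ℂ] MvPolynomial (Fin p) (Ry q))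
        = mapAlgHom (Algebra.ofId ℂ (Ry q)) := by
      apply algHom_ext
      intro i
      simp [eqv_X_inl, mapAlgHom_apply]
    have := AlgHom.congr_fun hcomp t
    simpa [mapAlgHom_apply] using this
  rw [ex, h, map_esymm]

lemma eqv_ey (p q s : ℕ) : eqv p q (ey p q s) = C (esymm (Fin q) ℂ s) := by
  have h : ∀ t : Ry q, eqv p q (rename Sum.inr t) = C t := by
    intro t
    have hcomp : ((eqv p q).toAlgHom.comp (rename Sum.inr) :
        Ry q →ₐ[ℂ] MvPolynomial (Fin p) (Ry q))
        = (IsScalarTower.toAlgHom ℂ (Ry q) (MvPolynomial (Fin p) (Ry q))) := by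
      apply algHom_ext
      intro j
      simp [eqv_X_inr, IsScalarTower.toAlgHom, algebraMap_eq]
    have := AlgHom.congr_fun hcomp t
    simpa [IsScalarTower.toAlgHom, algebraMap_eq] using this
  rw [ey, h]

lemma eqv_Psi (p q : ℕ) (g : MvPolynomial (Fin p ⊕ Fin q) ℂ) :
    eqv p q (Psi p q g) = Amap p q (map (epsY q).toRingHom (eqv p q g)) := by
  have hcomp : ((eqv p q).toAlgHom.comp (Psi p q) :
      MvPolynomial (Fin p ⊕ Fin q) ℂ →ₐ[ℂ] MvPolynomial (Fin p) (Ry q))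
      = ((Amap p q).restrictScalars ℂ).comp
        ((mapAlgHom ((epsY q).restrictScalars ℂ)).comp (eqv p q).toAlgHom) := by
    apply algHom_ext
    rintro (i | j)
    · simp only [AlgHom.comp_apply, AlgEquiv.toAlgHom_eq_coe, AlgHom.coe_coe, AlgEquiv.coe_toAlgHom]
      rw [show (Psi p q) (X (Sum.inl i)) = ex p q (i.1 + 1) from by simp [Psi],
        eqv_ex, eqv_X_inl]
      simp [mapAlgHom_apply, Amap]
    · simp only [AlgHom.comp_apply, AlgEquiv.toAlgHom_eq_coe, AlgHom.coe_coe, AlgEquiv.coe_toAlgHom]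
      rw [show (Psi p q) (X (Sum.inr j)) = ey p q (j.1 + 1) from by simp [Psi],
        eqv_ey, eqv_X_inr]
      simp [mapAlgHom_apply, Amap, epsY, algebraMap_eq]
  have := AlgHom.congr_fun hcomp g
  simpa [mapAlgHom_apply] using this

lemma Amap_map (p q : ℕ) (h : Ry q →+* Ry q) (G : MvPolynomial (Fin p) (Ry q)) :
    Amap p q (map h G) = map h (Amap p q G) := by
  have hcomp : ((Amap p q).toRingHom.comp (map h))
      = (map h).comp (Amap p q).toRingHom := by
    apply ringHom_ext
    · intro r
      simp [Amap, algebraMap_eq]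
    · intro i
      simp [Amap, map_esymm]
  exact RingHom.congr_fun hcomp G

lemma Psi_inj (p q : ℕ) : Function.Injective (Psi p q) := by
  intro g1 g2 hg
  have h1 := congrArg (eqv p q) hg
  rw [eqv_Psi, eqv_Psi] at h1
  have h2 := Amap_inj p q h1
  have h3 := MvPolynomial.map_injective (epsY q).toRingHom (epsY_inj q) h2
  exact (eqv p q).injective h3

lemma eqv_rename_x (p q : ℕ) (sx : Equiv.Perm (Fin p))
    (f : MvPolynomial (Fin p ⊕ Fin q) ℂ) :
    eqv p q (rename (Equiv.sumCongr sx (1 : Equiv.Perm (Fin q))) f)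
      = rename ⇑sx (eqv p q f) := by
  have hcomp : ((eqv p q).toAlgHom.comp (rename (Equiv.sumCongr sx 1)))
      = (((rename ⇑sx : MvPolynomial (Fin p) (Ry q) →ₐ[Ry q] MvPolynomial (Fin p) (Ry q)).restrictScalars ℂ)).comp (eqv p q).toAlgHom := by
    apply algHom_ext
    rintro (i | j) <;> simp [eqv_X_inl, eqv_X_inr]
  exact AlgHom.congr_fun hcomp f

lemma eqv_rename_y (p q : ℕ) (sy : Equiv.Perm (Fin q))
    (f : MvPolynomial (Fin p ⊕ Fin q) ℂ) :
    eqv p q (rename (Equiv.sumCongr (1 : Equiv.Perm (Fin p)) sy) f)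
      = map (rename ⇑sy : Ry q →ₐ[ℂ] Ry q).toRingHom (eqv p q f) := by
  have hcomp : ((eqv p q).toAlgHom.comp (rename (Equiv.sumCongr 1 sy)))
      = (mapAlgHom (rename ⇑sy : Ry q →ₐ[ℂ] Ry q)).comp (eqv p q).toAlgHom := by
    apply algHom_ext
    rintro (i | j) <;> simp [eqv_X_inl, eqv_X_inr, mapAlgHom_apply]
  have := AlgHom.congr_fun hcomp f
  simpa [mapAlgHom_apply] using this

lemma Psi_surj_bisym (p q : ℕ) (f : MvPolynomial (Fin p ⊕ Fin q) ℂ)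
    (hf : BiSymmetric p q f) : ∃ g, Psi p q g = f := by
  set F := eqv p q f with hF
  have hFsym : MvPolynomial.IsSymmetric F := by
    intro sx
    rw [hF, ← eqv_rename_x, hf sx 1]
  obtain ⟨G, hG⟩ := esymmAlgHom_surjective (σ := Fin p) (R := Ry q) (n := p)
    (by simp) ⟨F, (mem_symmetricSubalgebra F).2 hFsym⟩
  have hAG : Amap p q G = F := by
    rw [Amap_eq, Function.comp_apply, hG]
  have hya : ∀ sy : Equiv.Perm (Fin q),
      map (rename ⇑sy : Ry q →ₐ[ℂ] Ry q).toRingHom G = G := by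
    intro sy
    apply Amap_inj
    rw [Amap_map, hAG, hF, ← eqv_rename_y, hf 1 sy]
  have hcoef : ∀ d : Fin p →₀ ℕ, ∃ r : Ry q, epsY q r = coeff d G := by
    intro d
    have hsym : MvPolynomial.IsSymmetric (coeff d G) := by
      intro sy
      have := congrArg (coeff d) (hya sy)
      rwa [coeff_map] at this
    obtain ⟨r, hr⟩ := esymmAlgHom_surjective (σ := Fin q) (R := ℂ) (n := q)
      (by simp) ⟨coeff d G, (mem_symmetricSubalgebra _).2 hsym⟩
    refine ⟨r, ?_⟩
    rw [epsY_eq, Function.comp_apply, hr]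
  choose c hc using hcoef
  set G₀ : MvPolynomial (Fin p) (Ry q) := ∑ d ∈ G.support, monomial d (c d) with hG₀
  have hmapG₀ : map (epsY q).toRingHom G₀ = G := by
    rw [hG₀, map_sum]
    simp_rw [map_monomial]
    have : ∀ d ∈ G.support, (monomial d) ((epsY q).toRingHom (c d))
        = monomial d (coeff d G) := fun d _ => by rw [show (epsY q).toRingHom (c d)
          = epsY q (c d) from rfl, hc]
    rw [Finset.sum_congr rfl this, support_sum_monomial_coeff]
  refine ⟨(eqv p q).symm G₀, ?_⟩
  apply (eqv p q).injective
  rw [eqv_Psi, AlgEquiv.apply_symm_apply, hmapG₀, hAG, hF]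

lemma phi_Psi (p' q : ℕ) (g : MvPolynomial (Fin (p' + 1) ⊕ Fin q) ℂ) :
    phi p' q (Psi (p' + 1) q g) = Psi p' q (phi p' q g) := by
  have hcomp : (phi p' q).comp (Psi (p' + 1) q) = (Psi p' q).comp (phi p' q) := by
    apply algHom_ext
    rintro (i | j)
    · rw [AlgHom.comp_apply, AlgHom.comp_apply,
        show Psi (p' + 1) q (X (Sum.inl i)) = ex (p' + 1) q (i.1 + 1) from by simp [Psi],
        phi_ex, show phi p' q (X (Sum.inl i))
          = Fin.lastCases (motive := fun _ => MvPolynomial (Fin p' ⊕ Fin q) ℂ) 0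
            (fun i₀ => X (Sum.inl i₀)) i from by simp [phi]]
      induction i using Fin.lastCases with
      | last =>
          rw [Fin.lastCases_last, map_zero, Fin.val_last, ex_eq_zero (Nat.lt_succ_self p')]
      | cast i₀ =>
          rw [Fin.lastCases_castSucc]
          simp [Psi]
    · rw [AlgHom.comp_apply, AlgHom.comp_apply,
        show Psi (p' + 1) q (X (Sum.inr j)) = ey (p' + 1) q (j.1 + 1) from by simp [Psi],
        phi_ey, show phi p' q (X (Sum.inr j)) = X (Sum.inr j) from by simp [phi]]
      simp [Psi]
  exact AlgHom.congr_fun hcomp g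

lemma phi_section (p' q : ℕ) (b : MvPolynomial (Fin p' ⊕ Fin q) ℂ) :
    phi p' q (rename (Sum.map Fin.castSucc id) b) = b := by
  have hcomp : (phi p' q).comp (rename (Sum.map Fin.castSucc id))
      = AlgHom.id ℂ (MvPolynomial (Fin p' ⊕ Fin q) ℂ) := by
    apply algHom_ext
    rintro (i | j) <;> simp [phi]
  exact AlgHom.congr_fun hcomp b

lemma phi_ker_dvd (p' q : ℕ) (G : MvPolynomial (Fin (p' + 1) ⊕ Fin q) ℂ)
    (hG : phi p' q G = 0) : X (Sum.inl (Fin.last p')) ∣ G := by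
  set I : Ideal (MvPolynomial (Fin (p' + 1) ⊕ Fin q) ℂ)
    := Ideal.span {X (Sum.inl (Fin.last p'))} with hI
  set v : Fin (p' + 1) ⊕ Fin q → MvPolynomial (Fin (p' + 1) ⊕ Fin q) ℂ
    := Sum.elim (Fin.lastCases 0 (fun i => X (Sum.inl (Fin.castSucc i))))
      (fun j => X (Sum.inr j)) with hv
  have hcomp : ((rename (Sum.map Fin.castSucc id)).comp (phi p' q) :
      MvPolynomial (Fin (p' + 1) ⊕ Fin q) ℂ →ₐ[ℂ] MvPolynomial (Fin (p' + 1) ⊕ Fin q) ℂ)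
      = aeval v := by
    apply algHom_ext
    rintro (i | j)
    · rw [AlgHom.comp_apply, show phi p' q (X (Sum.inl i))
          = Fin.lastCases (motive := fun _ => MvPolynomial (Fin p' ⊕ Fin q) ℂ) 0
            (fun i₀ => X (Sum.inl i₀)) i from by simp [phi], aeval_X]
      induction i using Fin.lastCases with
      | last => rw [Fin.lastCases_last, map_zero, hv]; simp
      | cast i₀ => rw [Fin.lastCases_castSucc, hv]; simp
    · rw [AlgHom.comp_apply, show phi p' q (X (Sum.inr j)) = X (Sum.inr j) from by
        simp [phi], aeval_X, hv]
      simp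
  have hmem : aeval v G - G ∈ I := by
    refine aeval_sub_mem I v ?_ G
    rintro (i | j)
    · induction i using Fin.lastCases with
      | last =>
          rw [hv]
          simp only [Sum.elim_inl, Fin.lastCases_last, zero_sub]
          exact I.neg_mem (Ideal.subset_span rfl)
      | cast i₀ => rw [hv]; simp
    · rw [hv]; simp
  have h0 : aeval v G = 0 := by
    rw [← AlgHom.congr_fun hcomp G, AlgHom.comp_apply, hG, map_zero]
  rw [h0, zero_sub] at hmem
  rw [← Ideal.mem_span_singleton, ← hI]
  simpa using I.neg_mem hmem

noncomputable def Rey (p q : ℕ) (a : MvPolynomial (Fin p ⊕ Fin q) ℂ) :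
    MvPolynomial (Fin p ⊕ Fin q) ℂ :=
  (((Fintype.card (Equiv.Perm (Fin p) × Equiv.Perm (Fin q)) : ℕ) : ℂ))⁻¹ •
    ∑ s : Equiv.Perm (Fin p) × Equiv.Perm (Fin q), rename (Equiv.sumCongr s.1 s.2) a

lemma card_ne_zero' (p q : ℕ) :
    ((Fintype.card (Equiv.Perm (Fin p) × Equiv.Perm (Fin q)) : ℕ) : ℂ) ≠ 0 := by
  exact_mod_cast Nat.cast_ne_zero.2 Fintype.card_ne_zero

lemma Rey_bisym (p q : ℕ) (a : MvPolynomial (Fin p ⊕ Fin q) ℂ) :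
    BiSymmetric p q (Rey p q a) := by
  intro tx ty
  rw [Rey, map_smul, map_sum]
  congr 1
  have hterm : ∀ s : Equiv.Perm (Fin p) × Equiv.Perm (Fin q),
      rename (Equiv.sumCongr tx ty) (rename (Equiv.sumCongr s.1 s.2) a)
        = rename (Equiv.sumCongr (tx * s.1) (ty * s.2)) a := by
    intro s
    rw [rename_rename]
    have hfun : ⇑(Equiv.sumCongr tx ty) ∘ ⇑(Equiv.sumCongr s.1 s.2)
        = ⇑(Equiv.sumCongr (tx * s.1) (ty * s.2)) := by
      funext z
      cases z <;> simp [Equiv.Perm.mul_apply]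
    rw [hfun]
  rw [Finset.sum_congr rfl fun s _ => hterm s]
  exact Fintype.sum_equiv
    (Equiv.prodCongr (Equiv.mulLeft tx) (Equiv.mulLeft ty))
    (fun s => rename (Equiv.sumCongr (tx * s.1) (ty * s.2)) a)
    (fun s => rename (Equiv.sumCongr s.1 s.2) a) (fun s => rfl)

lemma Rey_of_bisym (p q : ℕ) (b : MvPolynomial (Fin p ⊕ Fin q) ℂ)
    (hb : BiSymmetric p q b) : Rey p q b = b := by
  rw [Rey, Finset.sum_congr rfl fun s _ => hb s.1 s.2, Finset.sum_const,
    Finset.card_univ, ← Nat.cast_smul_eq_nsmul ℂ, smul_smul,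
    inv_mul_cancel₀ (card_ne_zero' p q), one_smul]

lemma Rey_sum (p q : ℕ) {ι : Type*} (s : Finset ι)
    (g : ι → MvPolynomial (Fin p ⊕ Fin q) ℂ) :
    Rey p q (∑ i ∈ s, g i) = ∑ i ∈ s, Rey p q (g i) := by
  rw [Rey]
  simp_rw [map_sum]
  rw [Finset.sum_comm, Finset.smul_sum]
  rfl

lemma Rey_mul_bisym (p q : ℕ) (a c : MvPolynomial (Fin p ⊕ Fin q) ℂ)
    (hc : BiSymmetric p q c) : Rey p q (a * c) = Rey p q a * c := by
  rw [Rey, Rey]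
  simp_rw [map_mul]
  rw [Finset.sum_congr rfl fun s _ => by rw [hc s.1 s.2], ← Finset.sum_mul,
    smul_mul_assoc]

lemma bisym_ck (p q k : ℕ) : BiSymmetric p q (ck p q k) := by
  intro sx sy
  rw [ck, map_sum]
  exact Finset.sum_congr rfl fun r _ => by rw [map_mul, rename_ex, rename_ey]

/-- extension of a permutation of `Fin p'` to `Fin (p'+1)` fixing the last element -/
noncomputable def extPerm (p' : ℕ) (sx : Equiv.Perm (Fin p')) : Equiv.Perm (Fin (p' + 1)) :=
  Equiv.permCongr finSuccEquivLast.symm (Equiv.optionCongr sx)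

lemma extPerm_castSucc (p' : ℕ) (sx : Equiv.Perm (Fin p')) (i : Fin p') :
    extPerm p' sx (Fin.castSucc i) = Fin.castSucc (sx i) := by
  simp [extPerm, Equiv.permCongr_apply, finSuccEquivLast_castSucc]

lemma extPerm_last (p' : ℕ) (sx : Equiv.Perm (Fin p')) :
    extPerm p' sx (Fin.last p') = Fin.last p' := by
  simp [extPerm, Equiv.permCongr_apply, finSuccEquivLast_last]

lemma phi_bisym (p' q : ℕ) (f : MvPolynomial (Fin (p' + 1) ⊕ Fin q) ℂ)
    (hf : BiSymmetric (p' + 1) q f) : BiSymmetric p' q (phi p' q f) := by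
  intro sx sy
  have hcomp : (phi p' q).comp (rename (Equiv.sumCongr (extPerm p' sx) sy))
      = (rename (Equiv.sumCongr sx sy)).comp (phi p' q) := by
    apply algHom_ext
    rintro (i | j)
    · rw [AlgHom.comp_apply, AlgHom.comp_apply, rename_X, Equiv.sumCongr_apply,
        Sum.map_inl, show phi p' q (X (Sum.inl i))
          = Fin.lastCases (motive := fun _ => MvPolynomial (Fin p' ⊕ Fin q) ℂ) 0
            (fun i₀ => X (Sum.inl i₀)) i from by simp [phi]]
      induction i using Fin.lastCases with
      | last =>
          rw [extPerm_last, Fin.lastCases_last, map_zero]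
          simp [phi]
      | cast i₀ =>
          rw [extPerm_castSucc, Fin.lastCases_castSucc]
          simp [phi]
    · simp [phi]
  have h1 := AlgHom.congr_fun hcomp f
  rw [AlgHom.comp_apply, AlgHom.comp_apply, hf (extPerm p' sx) sy] at h1
  exact h1.symm


/-- (proof of Lemma `unitl`) For `2 ≤ p ≤ q` (here `p = p' + 1`) and any
bisymmetric `f`, `φ(f) ∈ J_{p-1,q}` iff `f` is congruent mod `J_{p,q}` to a
multiple `e_p(x)·h` with `h` bisymmetric: the kernel of the induced map of
quotient rings is the ideal generated by `σ_p`. -/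
theorem stmt_10 (p' q : ℕ) (hp : 1 ≤ p') (hpq : p' + 1 ≤ q)
    (f : MvPolynomial (Fin (p' + 1) ⊕ Fin q) ℂ)
    (hf : BiSymmetric (p' + 1) q f) :
    phi p' q f ∈ Jpq p' q ↔
      ∃ h : MvPolynomial (Fin (p' + 1) ⊕ Fin q) ℂ, BiSymmetric (p' + 1) q h ∧
        f - ex (p' + 1) q (p' + 1) * h ∈ Jpq (p' + 1) q := by

  constructor
  · intro hmem
    obtain ⟨a, ha⟩ := (Jpq_mem_iff _).1 hmem
    have heq : phi p' q f = ∑ k ∈ Finset.Icc 1 (p' + q), Rey p' q (a k) * ck p' q k := by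
      conv_lhs => rw [← Rey_of_bisym p' q _ (phi_bisym p' q f hf), ha]
      rw [Rey_sum]
      exact Finset.sum_congr rfl fun k _ => Rey_mul_bisym p' q _ _ (bisym_ck p' q k)
    have hlift : ∀ k : ℕ, ∃ B, BiSymmetric (p' + 1) q B ∧ phi p' q B = Rey p' q (a k) := by
      intro k
      obtain ⟨b, hb⟩ := Psi_surj_bisym p' q (Rey p' q (a k)) (Rey_bisym p' q (a k))
      refine ⟨Psi (p' + 1) q (rename (Sum.map Fin.castSucc id) b), Psi_bisym _ _ _, ?_⟩
      rw [phi_Psi, phi_section, hb]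
    choose B hBsym hBphi using hlift
    set g := f - ∑ k ∈ Finset.Icc 1 (p' + q), B k * ck (p' + 1) q k with hg
    have hphig : phi p' q g = 0 := by
      rw [hg, map_sub, map_sum]
      simp_rw [map_mul, hBphi, phi_ck]
      rw [heq, sub_self]
    have hgbisym : BiSymmetric (p' + 1) q g := by
      intro sx sy
      rw [hg, map_sub, hf sx sy, map_sum]
      congr 1
      refine Finset.sum_congr rfl fun k _ => ?_
      rw [map_mul, hBsym k sx sy, bisym_ck (p' + 1) q k sx sy]
    obtain ⟨G, hG⟩ := Psi_surj_bisym (p' + 1) q g hgbisym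
    have hphiG : phi p' q G = 0 := by
      apply Psi_inj p' q
      rw [← phi_Psi, hG, hphig, map_zero]
    obtain ⟨H, hH⟩ := phi_ker_dvd p' q G hphiG
    refine ⟨Psi (p' + 1) q H, Psi_bisym _ _ _, ?_⟩
    have hx : Psi (p' + 1) q (X (Sum.inl (Fin.last p'))) = ex (p' + 1) q (p' + 1) := by
      simp [Psi]
    have h2 : ex (p' + 1) q (p' + 1) * Psi (p' + 1) q H = g := by
      rw [← hx, ← map_mul, ← hH, hG]
    have h3 : f - ex (p' + 1) q (p' + 1) * Psi (p' + 1) q H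
        = ∑ k ∈ Finset.Icc 1 (p' + q), B k * ck (p' + 1) q k := by
      rw [h2, hg]
      ring
    rw [h3]
    refine (Jpq (p' + 1) q).sum_mem fun k hk => Ideal.mul_mem_left _ _ ?_
    rw [Finset.mem_Icc] at hk
    exact Ideal.subset_span ⟨k, hk.1, by omega, rfl⟩
  · rintro ⟨h, _, hJ⟩
    have heq : phi p' q f = phi p' q (f - ex (p' + 1) q (p' + 1) * h) := by
      rw [map_sub, map_mul, phi_ex, ex_eq_zero (Nat.lt_succ_self p'), zero_mul, sub_zero]
    rw [heq]
    exact phi_J hJ
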